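/- arXiv:2011.13163 — 4 statements merged into one kernel-verified Lean document; each statement's English description precedes it below -/
import Mathlib

section
/- Closeness centrality satisfies Axiom 2 (componentwise) in the following strong form: for every network g and every non-adjacent pair of distinct vertices i, j, if j ∈ Conn_g(i) then C_close(i, g+ij) > C_close(i, g), and if j ∉ Conn_g(i) then C_close(i, g+ij) < C_close(i, g). -/
/-!
Adding the edge `ij` never lengthens a path, and it puts `j` at distance `1` from `i`. If `j` was
already reachable, the components do not change and `d(i, j) ≥ 2` drops to `1`, so the total
distance from `i` strictly decreases. Otherwise `ij` is a bridge: distances inside the old component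
of `i` are unchanged and `j` joins it at distance `1`, so the total distance strictly increases.
Since `dist` is `0` between unreachable vertices, closeness is the inverse of the plain sum of
distances, and inversion reverses strict order on `[0, ∞]`.
-/

open SimpleGraph

/-- Degree of vertex `i` in network `g`. -/
noncomputable def deg {V : Type*} (g : SimpleGraph V) (i : V) : ℕ :=
  Nat.card (g.neighborSet i)

/-- The network `g` with the (missing) edge `ij` added. -/
def addE {V : Type*} (g : SimpleGraph V) (i j : V) : SimpleGraph V :=
  g ⊔ SimpleGraph.fromEdgeSet {s(i, j)}

/-- The network `g` with the edge `ij` removed. -/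
def delE {V : Type*} (g : SimpleGraph V) (i j : V) : SimpleGraph V :=
  g.deleteEdges {s(i, j)}

/-- Utility of agent `i` in the game with centralities `C` and edge cost `c`. -/
noncomputable def util {V : Type*} (C : V → SimpleGraph V → ℝ) (c : ℝ) (i : V)
    (g : SimpleGraph V) : ℝ :=
  C i g - c * (deg g i)

/-- Adding the missing edge `ij` is an improving move. -/
def ImprovingAdd {V : Type*} (C : V → SimpleGraph V → ℝ) (c : ℝ) (g : SimpleGraph V)
    (i j : V) : Prop :=
  util C c i (addE g i j) ≥ util C c i g ∧ util C c j (addE g i j) ≥ util C c j g ∧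
    (util C c i (addE g i j) > util C c i g ∨ util C c j (addE g i j) > util C c j g)

/-- Deleting the edge `ij` is an improving move. -/
def ImprovingDel {V : Type*} (C : V → SimpleGraph V → ℝ) (c : ℝ) (g : SimpleGraph V)
    (i j : V) : Prop :=
  util C c i (delE g i j) > util C c i g ∨ util C c j (delE g i j) > util C c j g

/-- `g` is pairwise stable at edge cost `c`. -/
def PairwiseStable {V : Type*} (C : V → SimpleGraph V → ℝ) (c : ℝ) (g : SimpleGraph V) : Prop :=
  (∀ i j : V, i ≠ j → ¬ g.Adj i j → ¬ ImprovingAdd C c g i j) ∧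
  (∀ i j : V, g.Adj i j → ¬ ImprovingDel C c g i j)

/-- `g` is asymptotically pairwise stable. -/
def APSN {V : Type*} (C : V → SimpleGraph V → ℝ) (g : SimpleGraph V) : Prop :=
  ∃ ε₀ : ℝ, 0 < ε₀ ∧ ∀ c : ℝ, 0 < c → c < ε₀ → PairwiseStable C c g

/-- Axiom 1: the centrality of agent `i` is increasing. -/
def Axiom1 {V : Type*} (C : V → SimpleGraph V → ℝ) (i : V) : Prop :=
  ∀ (g : SimpleGraph V) (j : V), j ≠ i → ¬ g.Adj i j → C i (addE g i j) > C i g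

/-- Axiom 1′: the centrality of agent `i` is decreasing. -/
def Axiom1' {V : Type*} (C : V → SimpleGraph V → ℝ) (i : V) : Prop :=
  ∀ (g : SimpleGraph V) (j : V), j ≠ i → ¬ g.Adj i j → C i (addE g i j) < C i g

/-- Axiom 2: the centrality of agent `i` is componentwise. -/
def Axiom2 {V : Type*} (C : V → SimpleGraph V → ℝ) (i : V) : Prop :=
  ∀ (g : SimpleGraph V) (j : V), j ≠ i → ¬ g.Adj i j →
    ((g.Reachable i j → C i (addE g i j) > C i g) ∧
     (¬ g.Reachable i j → C i (addE g i j) ≤ C i g))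

/-- Axiom 2′: the centrality of agent `i` is peripheral. -/
def Axiom2' {V : Type*} (C : V → SimpleGraph V → ℝ) (i : V) : Prop :=
  ∀ (g : SimpleGraph V) (j : V), j ≠ i → ¬ g.Adj i j →
    ((g.Reachable i j → C i (addE g i j) ≤ C i g) ∧
     (¬ g.Reachable i j → C i (addE g i j) > C i g))

/-- The centrality of agent `i` is degree homophilic with (strictly increasing) `f`. -/
def DegreeHomophilic {V : Type*} (C : V → SimpleGraph V → ℝ) (i : V) (f : ℕ → ℤ) : Prop :=
  ∀ (g : SimpleGraph V) (j : V), j ≠ i → ¬ g.Adj i j →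
    (C i (addE g i j) > C i g ↔ (deg g j : ℤ) ≤ f (deg g i))

open scoped Classical in
/-- Closeness centrality of `i` in `g`, valued in `[0,∞]` with the convention `0⁻¹ = ∞`. -/
noncomputable def closeness {V : Type*} [Fintype V] (g : SimpleGraph V) (i : V) : ENNReal :=
  (∑ j : V, if g.Reachable i j then (g.dist i j : ENNReal) else 0)⁻¹

namespace SimpleGraph

variable {V : Type*} {G : SimpleGraph V} {u v a b : V}

lemma sup_edge_adj_of_ne (hne : u ≠ v) : (G ⊔ edge u v).Adj u v :=
  Or.inr ((edge_adj ..).mpr ⟨Or.inl ⟨rfl, rfl⟩, hne⟩)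

lemma Walk.exists_length_le_of_sup_edge (w : (G ⊔ edge u v).Walk a b) :
    (∃ p : G.Walk a b, p.length ≤ w.length) ∨
      (∃ (p : G.Walk a u) (q : G.Walk v b), p.length + q.length + 1 ≤ w.length) ∨
      (∃ (p : G.Walk a v) (q : G.Walk u b), p.length + q.length + 1 ≤ w.length) := by
  induction w with
  | nil => exact Or.inl ⟨.nil, le_rfl⟩
  | cons h w ih =>
    rw [Walk.length_cons]
    simp only [sup_adj, edge_adj] at h
    rcases h with h | ⟨⟨rfl, rfl⟩ | ⟨rfl, rfl⟩, -⟩ <;>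
      rcases ih with ⟨p, hp⟩ | ⟨p, q, hpq⟩ | ⟨p, q, hpq⟩
    · exact Or.inl ⟨.cons h p, by simp; omega⟩
    · exact Or.inr (Or.inl ⟨.cons h p, q, by simp; omega⟩)
    · exact Or.inr (Or.inr ⟨.cons h p, q, by simp; omega⟩)
    · exact Or.inr (Or.inl ⟨.nil, p, by simp; omega⟩)
    · exact Or.inr (Or.inl ⟨.nil, q, by simp; omega⟩)
    · exact Or.inl ⟨q, by omega⟩
    · exact Or.inr (Or.inr ⟨.nil, p, by simp; omega⟩)
    · exact Or.inl ⟨q, by omega⟩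
    · exact Or.inr (Or.inr ⟨.nil, q, by simp; omega⟩)

lemma reachable_sup_edge_iff (huv : G.Reachable u v) :
    (G ⊔ edge u v).Reachable a b ↔ G.Reachable a b := by
  refine ⟨fun ⟨w⟩ ↦ ?_, fun h ↦ h.mono le_sup_left⟩
  rcases w.exists_length_le_of_sup_edge with ⟨p, -⟩ | ⟨p, q, -⟩ | ⟨p, q, -⟩
  · exact p.reachable
  · exact p.reachable.trans (huv.trans q.reachable)
  · exact p.reachable.trans (huv.symm.trans q.reachable)

lemma dist_sup_edge_le (huv : G.Reachable u v) : (G ⊔ edge u v).dist a b ≤ G.dist a b := by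
  by_cases hab : G.Reachable a b
  · exact hab.dist_anti le_sup_left
  · rw [dist_eq_zero_of_not_reachable ((reachable_sup_edge_iff huv).not.mpr hab)]
    exact zero_le

lemma dist_sup_edge_of_not_reachable (huv : ¬G.Reachable u v) (hab : G.Reachable a b) :
    (G ⊔ edge u v).dist a b = G.dist a b := by
  refine le_antisymm (hab.dist_anti le_sup_left) ?_
  obtain ⟨w, hw⟩ :=
    (hab.mono le_sup_left : (G ⊔ edge u v).Reachable a b).exists_walk_length_eq_dist
  rcases w.exists_length_le_of_sup_edge with ⟨p, hp⟩ | ⟨p, q, -⟩ | ⟨p, q, -⟩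
  · exact (dist_le p).trans (hw ▸ hp)
  · exact absurd (p.reachable.symm.trans (hab.trans q.reachable.symm)) huv
  · exact absurd (q.reachable.trans (hab.symm.trans p.reachable)) huv

lemma sum_dist_sup_edge_lt [Fintype V] (huv : G.Reachable u v) (hne : u ≠ v)
    (hadj : ¬G.Adj u v) :
    ∑ k, (G ⊔ edge u v).dist u k < ∑ k, G.dist u k := by
  refine Finset.sum_lt_sum (fun k _ ↦ dist_sup_edge_le huv) ⟨v, Finset.mem_univ v, ?_⟩
  rw [dist_eq_one_iff_adj.mpr (sup_edge_adj_of_ne hne)]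
  exact huv.one_lt_dist_of_ne_of_not_adj hne hadj

lemma sum_dist_lt_sum_dist_sup_edge [Fintype V] (huv : ¬G.Reachable u v) :
    ∑ k, G.dist u k < ∑ k, (G ⊔ edge u v).dist u k := by
  have hne : u ≠ v := fun h ↦ huv (h ▸ Reachable.refl u)
  refine Finset.sum_lt_sum (fun k _ ↦ ?_) ⟨v, Finset.mem_univ v, ?_⟩
  · by_cases huk : G.Reachable u k
    · exact (dist_sup_edge_of_not_reachable huv huk).ge
    · rw [dist_eq_zero_of_not_reachable huk]
      exact zero_le
  · rw [dist_eq_zero_of_not_reachable huv, dist_eq_one_iff_adj.mpr (sup_edge_adj_of_ne hne)]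
    exact Nat.one_pos

end SimpleGraph

lemma closeness_eq_inv_sum_dist {V : Type*} [Fintype V] (G : SimpleGraph V) (a : V) :
    closeness G a = ((∑ k, G.dist a k : ℕ) : ENNReal)⁻¹ := by
  classical
  unfold closeness
  push_cast
  congr 1
  refine Finset.sum_congr rfl fun k _ ↦ ?_
  split_ifs with h
  · rfl
  · rw [dist_eq_zero_of_not_reachable h, Nat.cast_zero]

theorem statement_1 {V : Type*} [Fintype V] (g : SimpleGraph V) (i j : V)
    (hij : i ≠ j) (hadj : ¬ g.Adj i j) :
    (g.Reachable i j → closeness (addE g i j) i > closeness g i) ∧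
    (¬ g.Reachable i j → closeness (addE g i j) i < closeness g i) := by
  have hadd : addE g i j = g ⊔ edge i j := rfl
  simp only [hadd, closeness_eq_inv_sum_dist, gt_iff_lt, ENNReal.inv_lt_inv, Nat.cast_lt]
  exact ⟨fun h ↦ sum_dist_sup_edge_lt h hij hadj, sum_dist_lt_sum_dist_sup_edge⟩
end

section
/- For every network g and every non-adjacent pair of distinct vertices i, j, the game-theoretic centrality satisfies C_GT(i, g+ij) − C_GT(i, g) = 1/(deg_g(j)+2) − 1/((deg_g(i)+1)(deg_g(i)+2)); consequently C_GT(i, g+ij) > C_GT(i, g) if and only if deg_g(j) ≤ (deg_g(i)+1)(deg_g(i)+2) − 3 (as integers). Hence game-theoretic centrality is degree homophilic with the strictly increasing function f : ℕ → ℤ, f(n) = (n+1)(n+2) − 3, which satisfies f(0) = −1. -/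
/-! Adding `ij` changes only the degrees of `i` and `j`, each by one, so in the sum defining
`C_GT(i, ·)` only two terms move: the term of `i` itself drops from `1/(dᵢ+1)` to `1/(dᵢ+2)`, and
`j` joins the closed neighbourhood with weight `1/(dⱼ+2)`. The gain is positive exactly when
`dⱼ + 2 < (dᵢ+1)(dᵢ+2)`. -/

open SimpleGraph

open scoped Classical in
/-- Game-theoretic centrality of `i` in `g`: `∑_{j ∈ N(i) ∪ {i}} 1/(deg j + 1)`. -/
noncomputable def CGT {V : Type*} [Fintype V] (g : SimpleGraph V) (i : V) : ℝ :=
  ∑ j : V, if j = i ∨ g.Adj i j then 1 / ((deg g j : ℝ) + 1) else 0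

/-- The function `f(n) = (n+1)(n+2) − 3`. -/
def fGT (n : ℕ) : ℤ := ((n : ℤ) + 1) * ((n : ℤ) + 2) - 3

section AddEdge

variable {V : Type*} {g : SimpleGraph V} {i j : V}

lemma addE_eq_sup_edge : addE g i j = g ⊔ edge i j := rfl

lemma addE_comm : addE g i j = addE g j i := by
  rw [addE_eq_sup_edge, addE_eq_sup_edge, edge_comm]

lemma deg_eq_ncard (g : SimpleGraph V) (k : V) : deg g k = (g.neighborSet k).ncard :=
  Nat.card_coe_set_eq _

lemma addE_adj_left (hij : i ≠ j) {k : V} : (addE g i j).Adj i k ↔ k = j ∨ g.Adj i k := by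
  simp only [addE_eq_sup_edge, sup_adj, edge_adj, true_and, hij, false_and, or_false]
  constructor
  · rintro (h | ⟨rfl, -⟩)
    exacts [Or.inr h, Or.inl rfl]
  · rintro (rfl | h)
    exacts [Or.inr ⟨rfl, hij⟩, Or.inl h]

lemma neighborSet_addE_left (hij : i ≠ j) :
    (addE g i j).neighborSet i = insert j (g.neighborSet i) :=
  Set.ext fun _ => addE_adj_left hij

lemma neighborSet_addE_of_ne {k : V} (hki : k ≠ i) (hkj : k ≠ j) :
    (addE g i j).neighborSet k = g.neighborSet k := by
  ext m
  simp [addE_eq_sup_edge, edge_adj, hki, hkj]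

lemma deg_addE_left [Finite V] (hij : i ≠ j) (hadj : ¬ g.Adj i j) :
    deg (addE g i j) i = deg g i + 1 := by
  rw [deg_eq_ncard, deg_eq_ncard, neighborSet_addE_left hij,
    Set.ncard_insert_of_notMem (show j ∉ g.neighborSet i from hadj)]

lemma deg_addE_right [Finite V] (hij : i ≠ j) (hadj : ¬ g.Adj i j) :
    deg (addE g i j) j = deg g j + 1 := by
  rw [addE_comm]
  exact deg_addE_left hij.symm fun h => hadj h.symm

lemma deg_addE_of_ne {k : V} (hki : k ≠ i) (hkj : k ≠ j) :
    deg (addE g i j) k = deg g k := by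
  rw [deg_eq_ncard, deg_eq_ncard, neighborSet_addE_of_ne hki hkj]

end AddEdge

section GameTheoreticCentrality

variable {V : Type*} [Fintype V] {g : SimpleGraph V} {i j : V}

lemma CGT_addE_sub (hij : i ≠ j) (hadj : ¬ g.Adj i j) :
    CGT (addE g i j) i - CGT g i
      = 1 / ((deg g j : ℝ) + 2) - 1 / (((deg g i : ℝ) + 1) * ((deg g i : ℝ) + 2)) := by
  classical
  rw [CGT, CGT, ← Finset.sum_sub_distrib, Fintype.sum_eq_add i j hij]
  · simp only [true_or, if_true, addE_adj_left hij, hadj, hij.symm, or_self, or_true, if_false,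
      deg_addE_left hij hadj, deg_addE_right hij hadj]
    push_cast
    field_simp
    ring
  · rintro k ⟨hki, hkj⟩
    rw [deg_addE_of_ne hki hkj]
    simp only [addE_adj_left hij, hkj, false_or, sub_self]

lemma CGT_addE_gt_iff (hij : i ≠ j) (hadj : ¬ g.Adj i j) :
    CGT (addE g i j) i > CGT g i ↔
      (deg g j : ℤ) ≤ ((deg g i : ℤ) + 1) * ((deg g i : ℤ) + 2) - 3 := by
  have hj : (0 : ℝ) < (deg g j : ℝ) + 2 := by positivity
  have hi : (0 : ℝ) < ((deg g i : ℝ) + 1) * ((deg g i : ℝ) + 2) := by positivity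
  have hcast : (deg g j : ℝ) + 2 < ((deg g i : ℝ) + 1) * ((deg g i : ℝ) + 2) ↔
      (deg g j : ℤ) + 2 < ((deg g i : ℤ) + 1) * ((deg g i : ℤ) + 2) := by
    norm_cast
  rw [gt_iff_lt, ← sub_pos, CGT_addE_sub hij hadj, sub_pos, one_div_lt_one_div hi hj, hcast]
  omega

end GameTheoreticCentrality

lemma fGT_strictMono : StrictMono fGT :=
  strictMono_nat_of_lt_succ fun n => by
    simp only [fGT]
    push_cast
    nlinarith [Int.natCast_nonneg n]

theorem statement_2 {V : Type*} [Fintype V] :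
    (∀ (g : SimpleGraph V) (i j : V), i ≠ j → ¬ g.Adj i j →
      CGT (addE g i j) i - CGT g i
        = 1 / ((deg g j : ℝ) + 2) - 1 / (((deg g i : ℝ) + 1) * ((deg g i : ℝ) + 2)) ∧
      (CGT (addE g i j) i > CGT g i ↔
        (deg g j : ℤ) ≤ ((deg g i : ℤ) + 1) * ((deg g i : ℤ) + 2) - 3)) ∧
    StrictMono fGT ∧ fGT 0 = -1 ∧
    (∀ i : V, DegreeHomophilic (fun v h => CGT h v) i fGT) := by
  refine ⟨fun g i j hij hadj => ⟨CGT_addE_sub hij hadj, CGT_addE_gt_iff hij hadj⟩,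
    fGT_strictMono, rfl, ?_⟩
  intro i g j hji hadj
  exact CGT_addE_gt_iff hji.symm hadj
end

section
/- Let f : ℕ → ℤ be strictly increasing and assume every agent's centrality is degree homophilic with f. Let g be a network and ij ∈ E(g). Then there exists c₀ > 0 such that deleting ij is an improving move at every cost c with 0 < c < c₀, if and only if deg_g(j) − 1 > f(deg_g(i) − 1) or deg_g(i) − 1 > f(deg_g(j) − 1). -/
open SimpleGraph

/-
Deleting `ij` changes agent `i`'s utility by `C_i(g - ij) - C_i(g) + c`, so for all small costs it is
improving iff `C_i(g - ij) ≥ C_i(g)` for `i` or for `j`. Since `g = (g - ij) + ij`, degree homophily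
applied in `g - ij`, where the degrees of `i` and `j` have dropped by one, says exactly when adding
`ij` back strictly raises `C_i`.
-/

section EdgeSurgery

variable {V : Type*} {g : SimpleGraph V} {i j : V}

lemma addE_delE (h : g.Adj i j) : addE (delE g i j) i j = g := by
  ext a b
  simp only [addE, delE, sup_adj, deleteEdges_adj, fromEdgeSet_adj, Set.mem_singleton_iff,
    Sym2.eq_iff]
  constructor
  · rintro (⟨hab, _⟩ | ⟨(⟨rfl, rfl⟩ | ⟨rfl, rfl⟩), _⟩)
    · exact hab
    · exact h
    · exact h.symm
  · intro hab
    by_cases he : (a = i ∧ b = j) ∨ (a = j ∧ b = i)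
    · exact Or.inr ⟨he, hab.ne⟩
    · exact Or.inl ⟨hab, he⟩

lemma not_adj_delE (g : SimpleGraph V) (i j : V) : ¬ (delE g i j).Adj i j := by
  simp [delE]

lemma delE_comm (g : SimpleGraph V) (i j : V) : delE g i j = delE g j i := by
  rw [delE, delE, Sym2.eq_swap]

lemma neighborSet_delE_left (h : g.Adj i j) :
    (delE g i j).neighborSet i = g.neighborSet i \ {j} := by
  ext x
  simp only [mem_neighborSet, delE, deleteEdges_adj, Set.mem_singleton_iff, Sym2.eq_iff,
    Set.mem_sdiff]
  refine and_congr_right fun _ => not_congr ⟨?_, fun hxj => Or.inl ⟨trivial, hxj⟩⟩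
  rintro (⟨-, rfl⟩ | ⟨rfl, rfl⟩)
  · rfl
  · exact absurd rfl h.ne

lemma deg_delE_left_add_one [Finite V] (h : g.Adj i j) : deg (delE g i j) i + 1 = deg g i := by
  rw [deg, deg, neighborSet_delE_left h, Nat.card_coe_set_eq, Nat.card_coe_set_eq,
    Set.ncard_sdiff_singleton_add_one (show j ∈ g.neighborSet i from h)]

end EdgeSurgery

lemma improvingDel_iff {V : Type*} [Finite V] {C : V → SimpleGraph V → ℝ} {c : ℝ}
    {g : SimpleGraph V} {i j : V} (h : g.Adj i j) :
    ImprovingDel C c g i j ↔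
      C i g - C i (delE g i j) < c ∨ C j g - C j (delE g i j) < c := by
  have hdi : (deg g i : ℝ) = deg (delE g i j) i + 1 := by
    exact_mod_cast (deg_delE_left_add_one h).symm
  have hdj : (deg g j : ℝ) = deg (delE g i j) j + 1 := by
    rw [delE_comm]; exact_mod_cast (deg_delE_left_add_one h.symm).symm
  simp only [ImprovingDel, util, hdi, hdj]
  refine or_congr ?_ ?_ <;> constructor <;> intro <;> linarith

lemma exists_forall_lt_or_lt_iff (a b : ℝ) :
    (∃ c₀ : ℝ, 0 < c₀ ∧ ∀ c : ℝ, 0 < c → c < c₀ → a < c ∨ b < c) ↔ a ≤ 0 ∨ b ≤ 0 := by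
  constructor
  · rintro ⟨c₀, hc₀, hsmall⟩
    by_contra! hab
    have hc : 0 < min (c₀ / 2) (min a b) := lt_min (half_pos hc₀) (lt_min hab.1 hab.2)
    rcases hsmall _ hc ((min_le_left _ _).trans_lt (half_lt_self hc₀)) with ha | hb
    · exact ha.not_ge ((min_le_right _ _).trans (min_le_left _ _))
    · exact hb.not_ge ((min_le_right _ _).trans (min_le_right _ _))
  · rintro (ha | hb)
    · exact ⟨1, one_pos, fun c hc _ => Or.inl (ha.trans_lt hc)⟩
    · exact ⟨1, one_pos, fun c hc _ => Or.inr (hb.trans_lt hc)⟩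

lemma DegreeHomophilic.lt_iff_of_adj {V : Type*} [Finite V] {C : V → SimpleGraph V → ℝ}
    {f : ℕ → ℤ} {g : SimpleGraph V} {i j : V} (hC : DegreeHomophilic C i f) (h : g.Adj i j) :
    C i (delE g i j) < C i g ↔ (deg g j : ℤ) - 1 ≤ f (deg g i - 1) := by
  have hi := deg_delE_left_add_one h
  have hj := deg_delE_left_add_one h.symm
  rw [delE_comm] at hj
  have := hC (delE g i j) j h.ne.symm (not_adj_delE g i j)
  rw [addE_delE h] at this
  rw [← gt_iff_lt, this, ← hi, ← hj]
  simp

theorem statement_7_general {V : Type*} [Fintype V] (C : V → SimpleGraph V → ℝ) (f : ℕ → ℤ)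
    (hC : ∀ i, DegreeHomophilic C i f)
    (g : SimpleGraph V) (i j : V) (hadj : g.Adj i j) :
    (∃ c₀ : ℝ, 0 < c₀ ∧ ∀ c : ℝ, 0 < c → c < c₀ → ImprovingDel C c g i j) ↔
      ((deg g j : ℤ) - 1 > f (deg g i - 1) ∨ (deg g i : ℤ) - 1 > f (deg g j - 1)) := by
  simp only [improvingDel_iff hadj]
  rw [exists_forall_lt_or_lt_iff, sub_nonpos, sub_nonpos, ← not_lt, ← not_lt,
    (hC i).lt_iff_of_adj hadj, delE_comm, (hC j).lt_iff_of_adj hadj.symm]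
  simp only [not_le, gt_iff_lt]

theorem statement_7 {V : Type*} [Fintype V] (C : V → SimpleGraph V → ℝ) (f : ℕ → ℤ)
    (hf : StrictMono f) (hC : ∀ i, DegreeHomophilic C i f)
    (g : SimpleGraph V) (i j : V) (hadj : g.Adj i j) :
    (∃ c₀ : ℝ, 0 < c₀ ∧ ∀ c : ℝ, 0 < c → c < c₀ → ImprovingDel C c g i j) ↔
      ((deg g j : ℤ) - 1 > f (deg g i - 1) ∨ (deg g i : ℤ) - 1 > f (deg g j - 1)) :=
  statement_7_general C f hC g i j hadj
end

section
/- Let g be a network, i a vertex of g, and j a vertex with ij ∉ g. (i) If i is not isolated in g and j ∉ Conn_g(i), then C_ecc(i, g+ij) ≤ C_ecc(i, g). (ii) If j ∈ Conn_g(i), then C_ecc(i, g+ij) ≥ C_ecc(i, g); moreover the inequality is strict if for every vertex k ∈ Conn_g(i) with d_g(i,k) = ecc_g(i), j lies on some shortest path from i to k in g (that is, d_g(i,j) + d_g(j,k) = d_g(i,k)). -/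
open SimpleGraph

open scoped Classical in
/-- Eccentricity of `i` in `g`: the maximum distance from `i` to a vertex of its
connected component (`0` for an isolated vertex). -/
noncomputable def ecc {V : Type*} [Fintype V] (g : SimpleGraph V) (i : V) : ℕ :=
  Finset.univ.sup (fun j => if g.Reachable i j then g.dist i j else 0)

open scoped Classical in
/-- Eccentricity centrality of `i` in `g`: `0` if `i` is isolated,
`(n-1)/ecc_g(i)` otherwise. -/
noncomputable def Cecc {V : Type*} [Fintype V] (g : SimpleGraph V) (i : V) : ℝ :=
  if ∃ j, g.Adj i j then ((Fintype.card V : ℝ) - 1) / (ecc g i : ℝ) else 0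

namespace SimpleGraph

variable {V W : Type*}

lemma Walk.exists_walk_length_le_of_adj_or_eq {G : SimpleGraph V} {H : SimpleGraph W}
    (f : V → W) (hf : ∀ ⦃a b⦄, G.Adj a b → f a = f b ∨ H.Adj (f a) (f b)) {a b : V}
    (w : G.Walk a b) : ∃ w' : H.Walk (f a) (f b), w'.length ≤ w.length := by
  induction w with
  | nil => exact ⟨.nil, le_rfl⟩
  | cons h _ ih =>
    obtain ⟨w', hw'⟩ := ih
    rcases hf h with heq | hadj
    · exact ⟨w'.copy heq.symm rfl, by simp only [Walk.length_copy, Walk.length_cons]; omega⟩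
    · exact ⟨.cons hadj w', by simp only [Walk.length_cons]; omega⟩

lemma dist_le_dist_of_adj_or_eq {G : SimpleGraph V} {H : SimpleGraph W}
    (f : V → W) (hf : ∀ ⦃a b⦄, G.Adj a b → f a = f b ∨ H.Adj (f a) (f b)) {a b : V}
    (hab : G.Reachable a b) : H.dist (f a) (f b) ≤ G.dist a b := by
  obtain ⟨w, hw⟩ := hab.exists_walk_length_eq_dist
  obtain ⟨w', hw'⟩ := w.exists_walk_length_le_of_adj_or_eq f hf
  exact (dist_le w').trans (hw ▸ hw')

lemma Reachable.of_forall_adj_reachable {G H : SimpleGraph V}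
    (hGH : ∀ ⦃a b⦄, G.Adj a b → H.Reachable a b) {a b : V} (hab : G.Reachable a b) :
    H.Reachable a b := by
  rw [reachable_eq_reflTransGen] at hab ⊢
  exact Relation.reflTransGen_closed (fun _ _ h => reachable_eq_reflTransGen ▸ hGH h) _ _ hab

lemma exists_adj_of_reachable_of_ne {G : SimpleGraph V} {a b : V} (hab : G.Reachable a b)
    (hne : a ≠ b) : ∃ c, G.Adj a c := by
  obtain ⟨w⟩ := hab
  cases w with
  | nil => exact absurd rfl hne
  | cons h _ => exact ⟨_, h⟩

end SimpleGraph

section AddEdge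

variable {V : Type*} {g : SimpleGraph V} {i j : V}

lemma le_addE (g : SimpleGraph V) (i j : V) : g ≤ addE g i j := le_sup_left

lemma addE_adj_self (g : SimpleGraph V) (hij : i ≠ j) : (addE g i j).Adj i j :=
  Or.inr ((edge_adj i j i j).2 ⟨Or.inl ⟨rfl, rfl⟩, hij⟩)

lemma addE_adj_cases {a b : V} (h : (addE g i j).Adj a b) :
    g.Adj a b ∨ (a = i ∧ b = j) ∨ (a = j ∧ b = i) :=
  h.imp_right fun h => ((edge_adj i j a b).1 h).1

lemma reachable_addE_iff (hr : g.Reachable i j) {a b : V} :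
    (addE g i j).Reachable a b ↔ g.Reachable a b := by
  refine ⟨Reachable.of_forall_adj_reachable fun a b h => ?_, (·.mono (le_addE g i j))⟩
  rcases addE_adj_cases h with h | ⟨rfl, rfl⟩ | ⟨rfl, rfl⟩
  exacts [h.reachable, hr, hr.symm]

lemma dist_addE_le (hr : g.Reachable i j) (a b : V) : (addE g i j).dist a b ≤ g.dist a b := by
  by_cases hab : g.Reachable a b
  · exact hab.dist_anti (le_addE g i j)
  · rw [dist_eq_zero_of_not_reachable (mt (reachable_addE_iff hr).1 hab)]
    exact Nat.zero_le _

lemma dist_addE_le_dist_add_one (hij : i ≠ j) {k : V} (hjk : g.Reachable j k) :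
    (addE g i j).dist i k ≤ g.dist j k + 1 := by
  obtain ⟨w, hw⟩ := hjk.exists_walk_length_eq_dist
  calc (addE g i j).dist i k
      ≤ (Walk.cons (addE_adj_self g hij) (w.mapLe (le_addE g i j))).length := dist_le _
    _ = g.dist j k + 1 := by rw [Walk.length_cons, Walk.length_mapLe, hw]

open scoped Classical in
/-- Contracting the component of `j` onto `i` maps `addE g i j` onto `g` without stretching
any edge. -/
lemma dist_le_dist_addE (hnr : ¬ g.Reachable i j) (k : V) :
    g.dist i k ≤ (addE g i j).dist i k := by
  by_cases hik : g.Reachable i k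
  · let f : V → V := fun v => if g.Reachable j v then i else v
    have hf : ∀ ⦃a b⦄, (addE g i j).Adj a b → f a = f b ∨ g.Adj (f a) (f b) := by
      intro a b h
      rcases addE_adj_cases h with h | ⟨rfl, rfl⟩ | ⟨rfl, rfl⟩
      · by_cases hja : g.Reachable j a
        · exact Or.inl (by simp only [f, if_pos hja, if_pos (hja.trans h.reachable)])
        · have hjb : ¬ g.Reachable j b := fun hjb => hja (hjb.trans h.symm.reachable)
          exact Or.inr (by simpa only [f, if_neg hja, if_neg hjb] using h)
      all_goals
        exact Or.inl (by simp only [f, if_neg (mt Reachable.symm hnr), if_pos Reachable.rfl])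
    have hfi : f i = i := if_neg (mt Reachable.symm hnr)
    have hfk : f k = k := if_neg fun hjk => hnr (hik.trans hjk.symm)
    simpa only [hfi, hfk] using dist_le_dist_of_adj_or_eq f hf (hik.mono (le_addE g i j))
  · rw [dist_eq_zero_of_not_reachable hik]
    exact Nat.zero_le _

end AddEdge

section Eccentricity

variable {V : Type*} [Fintype V] {g g' : SimpleGraph V} {i : V}

/-- `dist` is `0` between unreachable vertices, so the guard in `ecc` is redundant. -/
lemma ecc_eq_sup_dist (g : SimpleGraph V) (i : V) : ecc g i = Finset.univ.sup (g.dist i) := by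
  classical
  unfold ecc
  congr 1
  funext k
  split_ifs with hk
  · rfl
  · exact (dist_eq_zero_of_not_reachable hk).symm

lemma ecc_le_iff {m : ℕ} : ecc g i ≤ m ↔ ∀ k, g.dist i k ≤ m := by
  simp [ecc_eq_sup_dist]

lemma ecc_lt_iff {m : ℕ} (hm : 0 < m) : ecc g i < m ↔ ∀ k, g.dist i k < m := by
  simp [ecc_eq_sup_dist, Finset.sup_lt_iff hm]

lemma dist_le_ecc (g : SimpleGraph V) (i k : V) : g.dist i k ≤ ecc g i :=
  ecc_le_iff.1 le_rfl k

lemma ecc_pos {k : V} (hk : g.Adj i k) : 0 < ecc g i :=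
  (dist_eq_one_iff_adj.2 hk).symm.trans_le (dist_le_ecc g i k)

lemma ecc_le_ecc_of_dist_le (h : ∀ k, g.dist i k ≤ g'.dist i k) : ecc g i ≤ ecc g' i :=
  ecc_le_iff.2 fun k => (h k).trans (dist_le_ecc g' i k)

lemma cecc_of_adj {k : V} (hk : g.Adj i k) :
    Cecc g i = ((Fintype.card V : ℝ) - 1) / (ecc g i : ℝ) := by
  classical
  exact if_pos ⟨k, hk⟩

lemma one_lt_card_of_adj {k : V} (hk : g.Adj i k) : (1 : ℝ) < Fintype.card V := by
  exact_mod_cast Fintype.one_lt_card_iff.2 ⟨i, k, hk.ne⟩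

lemma cecc_le_cecc_of_ecc_le {k k' : V} (hk : g.Adj i k) (hk' : g'.Adj i k')
    (h : ecc g i ≤ ecc g' i) : Cecc g' i ≤ Cecc g i := by
  rw [cecc_of_adj hk, cecc_of_adj hk']
  exact div_le_div_of_nonneg_left (by linarith [one_lt_card_of_adj hk])
    (by exact_mod_cast ecc_pos hk) (by exact_mod_cast h)

lemma cecc_lt_cecc_of_ecc_lt {k k' : V} (hk : g.Adj i k) (hk' : g'.Adj i k')
    (h : ecc g i < ecc g' i) : Cecc g' i < Cecc g i := by
  rw [cecc_of_adj hk, cecc_of_adj hk']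
  exact div_lt_div_of_pos_left (by linarith [one_lt_card_of_adj hk])
    (by exact_mod_cast ecc_pos hk) (by exact_mod_cast h)

/-- A peripheral vertex `k` is reached through the shortcut `ij` in `1 + d(j,k) < d(i,k)` steps,
because `d(i,j) ≥ 2`; every other vertex was already closer than `ecc g i`. -/
lemma ecc_addE_lt {j : V} (hr : g.Reachable i j) (hij : i ≠ j) (hadj : ¬ g.Adj i j)
    (hperiph : ∀ k, g.Reachable i k → g.dist i k = ecc g i →
      g.dist i j + g.dist j k = g.dist i k) :
    ecc (addE g i j) i < ecc g i := by
  have hij2 : 1 < g.dist i j := hr.one_lt_dist_of_ne_of_not_adj hij hadj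
  have hecc : 0 < ecc g i := by have := dist_le_ecc g i j; omega
  refine (ecc_lt_iff hecc).2 fun k => ?_
  rcases (dist_le_ecc g i k).lt_or_eq with hlt | heq
  · exact (dist_addE_le hr i k).trans_lt hlt
  · have hik : g.Reachable i k := Reachable.of_dist_ne_zero (by omega)
    have hsum := hperiph k hik heq
    have := dist_addE_le_dist_add_one hij (hr.symm.trans hik)
    omega

end Eccentricity

theorem statement_11 {V : Type*} [Fintype V] (g : SimpleGraph V) (i j : V) (hij : i ≠ j)
    (hadj : ¬ g.Adj i j) :
    -- (i)
    ((∃ k, g.Adj i k) → ¬ g.Reachable i j → Cecc (addE g i j) i ≤ Cecc g i) ∧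
    -- (ii)
    (g.Reachable i j →
      Cecc (addE g i j) i ≥ Cecc g i ∧
      ((∀ k : V, g.Reachable i k → g.dist i k = ecc g i →
          g.dist i j + g.dist j k = g.dist i k) →
        Cecc (addE g i j) i > Cecc g i)) := by
  have hedge := addE_adj_self g hij
  refine ⟨fun ⟨k, hk⟩ hnr => ?_, fun hr => ?_⟩
  · exact cecc_le_cecc_of_ecc_le hk hedge (ecc_le_ecc_of_dist_le (dist_le_dist_addE hnr))
  · obtain ⟨k, hk⟩ := exists_adj_of_reachable_of_ne hr hij
    exact ⟨cecc_le_cecc_of_ecc_le hedge hk (ecc_le_ecc_of_dist_le (dist_addE_le hr i)),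
      fun hperiph => cecc_lt_cecc_of_ecc_lt hedge hk (ecc_addE_lt hr hij hadj hperiph)⟩
end
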